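/- At a relabeling time N, for any j, the difference u_j - u_{j+1} (indices mod N) equals either -u_1 or N - u_1; equivalently, consecutive points on the circle differ in index by u_1 or u_1 - N. -/

import Mathlib

/-!
Write `F k = {k α}`. Ordering the points, the first point after `{u_j α}` on the circle is
`{u_{j+1} α}`, so the gap at `u_j` is `F (u_{j+1} - u_j)`, and since `F` is injective on `ℤ` the
gap length determines the index step. With `w = u_{N-1}`, the gaps at `0` and at `w` are `F u_1`
and `F (-w)`. If these are the only two gap lengths, every step is `u_1` or `-w`, and comparing
gaps at well-chosen points forces `u_1 + w = N`.
-/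

/-- The cyclic gap after the point `{m α}` among the points `{0α}, …, {(N-1)α}` on ℝ/ℤ:
the infimum of positive circular distances from `{m α}` to the other points. -/
noncomputable def gapAt (α : ℝ) (N : ℕ) (m : ℕ) : ℝ :=
  sInf {d : ℝ | 0 < d ∧ ∃ m' : ℕ, m' < N ∧ Int.fract ((m' : ℝ) * α - (m : ℝ) * α) = d}

open Classical in
/-- The set of distinct cyclic gap lengths of the configuration `{0α}, …, {(N-1)α}`. -/
noncomputable def gapSet (α : ℝ) (N : ℕ) : Finset ℝ :=
  (Finset.range N).image (gapAt α N)

/-- The multiset of cyclic gaps of the configuration `{0α}, …, {(N-1)α}`. -/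
noncomputable def gapMult (α : ℝ) (N : ℕ) : Multiset ℝ :=
  (Multiset.range N).map (gapAt α N)

/-- Cyclic extension of the ordering permutation `u` to integer indices, mod `N`. -/
def uc (N : ℕ) (u : ℕ → ℕ) (j : ℤ) : ℕ := u ((j % (N : ℤ)).toNat)

open Set

namespace Int

variable {R : Type*} [CommRing R] [LinearOrder R] [IsStrictOrderedRing R] [FloorRing R]

lemma fract_sub_fract (x y : R) : fract (fract x - fract y) = fract (x - y) :=
  fract_eq_fract.mpr ⟨⌊y⌋ - ⌊x⌋, by simp only [fract]; push_cast; abel⟩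

lemma fract_sub_of_le {x y : R} (hy : 0 ≤ y) (hx : x < 1) (hyx : y ≤ x) :
    fract (x - y) = x - y :=
  fract_eq_self.mpr ⟨sub_nonneg.mpr hyx, (sub_le_self x hy).trans_lt hx⟩

lemma fract_sub_of_lt {x y : R} (hx : 0 ≤ x) (hy : y < 1) (hxy : x < y) :
    fract (x - y) = x - y + 1 := by
  rw [← fract_add_one, fract_eq_self.mpr ⟨by linarith, by linarith⟩]

end Int

lemma Finset.eq_or_eq_of_card_eq_two {α : Type*} {s : Finset α} (hs : s.card = 2) {a b c : α}
    (ha : a ∈ s) (hb : b ∈ s) (hab : a ≠ b) (hc : c ∈ s) : c = a ∨ c = b := by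
  classical
  by_contra! h
  have hsub : ({c, a, b} : Finset α) ⊆ s := by
    simp only [Finset.insert_subset_iff, Finset.singleton_subset_iff]; exact ⟨hc, ha, hb⟩
  have := Finset.card_le_card hsub
  rw [Finset.card_insert_of_notMem (by simp [h.1, h.2]), Finset.card_pair hab, hs] at this
  omega

lemma Int.toNat_add_one_emod {N : ℕ} (hN : 0 < N) (j : ℤ) :
    ((j + 1) % (N : ℤ)).toNat = ((j % (N : ℤ)).toNat + 1) % N := by
  have h0 : 0 ≤ j % (N : ℤ) := Int.emod_nonneg j (by omega)
  zify [h0, Int.emod_nonneg (j + 1) (by omega : (N : ℤ) ≠ 0)]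
  rw [Int.toNat_of_nonneg h0, Int.toNat_of_nonneg (Int.emod_nonneg _ (by omega)),
    Int.emod_add_emod]

lemma Nat.add_one_mod_ne_self {N j : ℕ} (hN : 2 ≤ N) (hj : j < N) : (j + 1) % N ≠ j := by
  rcases Nat.lt_or_ge (j + 1) N with h | h
  · rw [Nat.mod_eq_of_lt h]; omega
  · rw [show j + 1 = N by omega, Nat.mod_self]; omega

lemma exists_uc_eq_and_uc_add_one_eq {N : ℕ} (hN : 0 < N) (u : ℕ → ℕ) (j : ℤ) :
    ∃ r < N, uc N u j = u r ∧ uc N u (j + 1) = u ((r + 1) % N) := by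
  refine ⟨_, ?_, rfl, by rw [uc, Int.toNat_add_one_emod hN]⟩
  have := Int.emod_lt_of_pos j (by omega : (0 : ℤ) < N)
  omega

namespace Irrational

variable {α : ℝ}

lemma fract_intCast_mul_pos (hα : Irrational α) {k : ℤ} (hk : k ≠ 0) :
    0 < Int.fract ((k : ℝ) * α) :=
  Int.fract_pos.mpr ((hα.intCast_mul hk).ne_int _)

lemma fract_intCast_mul_injective (hα : Irrational α) :
    Function.Injective fun k : ℤ => Int.fract ((k : ℝ) * α) := by
  intro k l h
  by_contra hne
  obtain ⟨z, hz⟩ := Int.fract_eq_fract.mp h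
  exact (hα.intCast_mul (sub_ne_zero.mpr hne)).ne_int z (by push_cast; rw [sub_mul]; exact hz)

end Irrational

lemma fract_sub_succ_le_of_strictMonoOn {N : ℕ} {x : ℕ → ℝ} (hx : StrictMonoOn x (Iio N))
    (h0 : ∀ i, 0 ≤ x i) (h1 : ∀ i, x i < 1) {i j : ℕ} (hi : i < N) (hj : j < N) (hij : i ≠ j) :
    Int.fract (x ((j + 1) % N) - x j) ≤ Int.fract (x i - x j) := by
  have hle : ∀ {k l}, k < N → l < N → k ≤ l → x k ≤ x l := fun hk hl hkl =>
    (hx.le_iff_le hk hl).mpr hkl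
  rcases Nat.lt_or_ge (j + 1) N with hsucc | hwrap
  · rw [Nat.mod_eq_of_lt hsucc, Int.fract_sub_of_le (h0 j) (h1 _) (hle hj hsucc j.le_succ)]
    rcases Nat.lt_or_gt_of_ne hij with hlt | hgt
    · rw [Int.fract_sub_of_lt (h0 i) (h1 j) (hx hi hj hlt)]
      linarith [h0 i, h1 (j + 1)]
    · rw [Int.fract_sub_of_le (h0 j) (h1 i) (hle hj hi hgt.le)]
      linarith [hle hsucc hi hgt]
  · rw [show j + 1 = N by omega, Nat.mod_self]
    have hlt : i < j := by omega
    rw [Int.fract_sub_of_lt (h0 i) (h1 j) (hx hi hj hlt),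
      Int.fract_sub_of_lt (h0 0) (h1 j) (hx (show 0 < N by omega) hj (by omega))]
    linarith [hle (by omega) hi i.zero_le]

section Gaps

variable {α : ℝ} {N : ℕ}

lemma fract_natCast_mul_sub (α : ℝ) (m' m : ℕ) :
    Int.fract ((m' : ℝ) * α - (m : ℝ) * α) = Int.fract ((((m' : ℤ) - m : ℤ) : ℝ) * α) := by
  push_cast; ring_nf

lemma gapAt_le (hα : Irrational α) {m m' : ℕ} (hm' : m' < N) (hne : m' ≠ m) :
    gapAt α N m ≤ Int.fract ((((m' : ℤ) - m : ℤ) : ℝ) * α) := by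
  refine csInf_le ⟨0, fun d hd => hd.1.le⟩ ⟨?_, m', hm', fract_natCast_mul_sub α m' m⟩
  exact hα.fract_intCast_mul_pos (by omega)

lemma exists_fract_eq_gapAt (hα : Irrational α) (hN : 2 ≤ N) (m : ℕ) :
    ∃ m' < N, m' ≠ m ∧ Int.fract ((((m' : ℤ) - m : ℤ) : ℝ) * α) = gapAt α N m := by
  set S := {d : ℝ | 0 < d ∧ ∃ m' : ℕ, m' < N ∧ Int.fract ((m' : ℝ) * α - (m : ℝ) * α) = d}
  have hfin : S.Finite :=
    ((Set.finite_Iio N).image fun m' : ℕ => Int.fract ((m' : ℝ) * α - (m : ℝ) * α)).subset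
      fun d ⟨_, m', hm', he⟩ => ⟨m', hm', he⟩
  obtain ⟨m', hm', hne⟩ : ∃ m' < N, m' ≠ m := by
    rcases Nat.eq_zero_or_pos m with rfl | hm
    exacts [⟨1, by omega, one_ne_zero⟩, ⟨0, by omega, by omega⟩]
  have hS : S.Nonempty := ⟨_, hα.fract_intCast_mul_pos (by omega : (m' : ℤ) - m ≠ 0),
    m', hm', fract_natCast_mul_sub α m' m⟩
  obtain ⟨hpos, m', hm', he⟩ := hS.csInf_mem hfin
  refine ⟨m', hm', ?_, (fract_natCast_mul_sub α m' m).symm.trans he⟩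
  rintro rfl
  rw [sub_self, Int.fract_zero] at he
  exact hpos.ne he

lemma gapAt_eq_fract_succ (hα : Irrational α) (hN : 2 ≤ N) {u : ℕ → ℕ}
    (hbij : BijOn u (Iio N) (Iio N))
    (hmono : StrictMonoOn (fun j => Int.fract ((u j : ℝ) * α)) (Iio N)) {j : ℕ} (hj : j < N) :
    gapAt α N (u j) = Int.fract ((((u ((j + 1) % N) : ℤ) - u j : ℤ) : ℝ) * α) := by
  have hsucc : (j + 1) % N < N := Nat.mod_lt _ (by omega)
  refine le_antisymm (gapAt_le hα (hbij.mapsTo hsucc)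
    (hbij.injOn.ne hsucc hj (Nat.add_one_mod_ne_self hN hj))) ?_
  obtain ⟨m', hm', hne, he⟩ := exists_fract_eq_gapAt hα hN (u j)
  obtain ⟨i, hi, rfl⟩ := hbij.surjOn hm'
  rw [← he]
  have hx := fract_sub_succ_le_of_strictMonoOn hmono (fun _ => Int.fract_nonneg _)
    (fun _ => Int.fract_lt_one _) hi hj (fun h => hne (congrArg u h))
  simpa only [Int.fract_sub_fract, fract_natCast_mul_sub] using hx

lemma eq_zero_of_strictMonoOn_fract {u : ℕ → ℕ} (hN : 0 < N) (hbij : BijOn u (Iio N) (Iio N))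
    (hmono : StrictMonoOn (fun j => Int.fract ((u j : ℝ) * α)) (Iio N)) : u 0 = 0 := by
  obtain ⟨i, hi, hui⟩ := hbij.surjOn (show 0 ∈ Iio N from hN)
  rcases Nat.eq_zero_or_pos i with rfl | hipos
  · exact hui
  · have := hmono (show 0 ∈ Iio N from hN) hi hipos
    simp only [hui, CharP.cast_eq_zero, zero_mul, Int.fract_zero] at this
    exact absurd this (Int.fract_nonneg _).not_gt

lemma gapAt_mem_gapSet {m : ℕ} (hm : m < N) : gapAt α N m ∈ gapSet α N :=
  Finset.mem_image.mpr ⟨m, Finset.mem_range.mpr hm, rfl⟩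

lemma gapAt_eq_or_eq_of_card_gapSet_eq_two (hrel : (gapSet α N).card = 2) {m₁ m₂ m : ℕ}
    (h₁ : m₁ < N) (h₂ : m₂ < N) (hne : gapAt α N m₁ ≠ gapAt α N m₂) (hm : m < N) :
    gapAt α N m = gapAt α N m₁ ∨ gapAt α N m = gapAt α N m₂ :=
  Finset.eq_or_eq_of_card_eq_two hrel (gapAt_mem_gapSet h₁) (gapAt_mem_gapSet h₂) hne
    (gapAt_mem_gapSet hm)

lemma add_le_of_gapAt_eq_or_eq (hα : Irrational α) (hN : 2 ≤ N) {p q : ℕ} (hp : 0 < p)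
    (hpN : p ≤ N) (htwo : ∀ m < N, gapAt α N m = Int.fract (((p : ℤ) : ℝ) * α) ∨
      gapAt α N m = Int.fract (((-q : ℤ) : ℝ) * α)) :
    p + q ≤ N := by
  -- The gap at `N - p` cannot be `{p α}`: its neighbour would have index `N`.
  obtain ⟨m', hm', -, he⟩ := exists_fract_eq_gapAt hα hN (N - p)
  rcases htwo (N - p) (by omega) with h | h <;> rw [h] at he
  all_goals have := hα.fract_intCast_mul_injective he; omega

/-- If `p + q < N`, the gap at `q` is at most `{p α}`, so the point `p + q` lies at distance
`{p α} - {-q α}` after `0`, inside the gap at `0`. -/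
lemma le_add_of_gapAt (hα : Irrational α) {p q : ℕ} (hp : 0 < p) (hq : 0 < q)
    (ha : gapAt α N 0 = Int.fract (((p : ℤ) : ℝ) * α))
    (hb : gapAt α N q = Int.fract (((-q : ℤ) : ℝ) * α)) :
    N ≤ p + q := by
  by_contra! hlt
  set a := Int.fract (((p : ℤ) : ℝ) * α)
  set b := Int.fract (((-q : ℤ) : ℝ) * α)
  have hba : b ≤ a := by
    have := gapAt_le hα (m := q) (m' := p + q) hlt (by omega)
    rwa [hb, show ((p + q : ℕ) : ℤ) - q = p by omega] at this
  have hsum : Int.fract ((((p + q : ℕ) : ℤ) - (0 : ℕ) : ℤ) * α) = a - b := by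
    rw [show (((p + q : ℕ) : ℤ) - (0 : ℕ) : ℤ) = p - (-q : ℤ) by omega, Int.cast_sub, sub_mul,
      ← Int.fract_sub_fract,
      Int.fract_sub_of_le (Int.fract_nonneg _) (Int.fract_lt_one _) hba]
  have := gapAt_le hα (m := 0) (m' := p + q) hlt (by omega)
  rw [ha, hsum] at this
  linarith [hα.fract_intCast_mul_pos (k := -q) (by omega)]

end Gaps

theorem consecutive_index_difference (α : ℝ) (hα : Irrational α) (N : ℕ) (hN : 2 ≤ N)
    (u : ℕ → ℕ) (hbij : Set.BijOn u (Set.Iio N) (Set.Iio N))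
    (hmono : StrictMonoOn (fun j => Int.fract ((u j : ℝ) * α)) (Set.Iio N))
    (hrel : (gapSet α N).card = 2) :
    ∀ j : ℤ, (uc N u j : ℤ) - (uc N u (j + 1) : ℤ) = -(u 1 : ℤ) ∨
      (uc N u j : ℤ) - (uc N u (j + 1) : ℤ) = (N : ℤ) - (u 1 : ℤ) := by
  have hgap : ∀ {j}, j < N → gapAt α N (u j) =
      Int.fract ((((u ((j + 1) % N) : ℤ) - u j : ℤ) : ℝ) * α) :=
    gapAt_eq_fract_succ hα hN hbij hmono
  have hu0 : u 0 = 0 := eq_zero_of_strictMonoOn_fract (by omega) hbij hmono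
  set p := u 1
  set q := u (N - 1)
  have hp : 0 < p := Nat.pos_of_ne_zero <|
    hu0 ▸ hbij.injOn.ne (show 1 < N by omega) (show 0 < N by omega) one_ne_zero
  have hq : 0 < q := Nat.pos_of_ne_zero <|
    hu0 ▸ hbij.injOn.ne (show N - 1 < N by omega) (show 0 < N by omega) (by omega)
  have ha : gapAt α N 0 = Int.fract (((p : ℤ) : ℝ) * α) := by
    have := hgap (j := 0) (by omega)
    rwa [hu0, zero_add, Nat.mod_eq_of_lt (by omega : 1 < N), Nat.cast_zero, sub_zero] at this
  have hb : gapAt α N q = Int.fract (((-q : ℤ) : ℝ) * α) := by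
    have := hgap (j := N - 1) (by omega)
    rwa [Nat.sub_add_cancel (by omega : 1 ≤ N), Nat.mod_self, hu0, Nat.cast_zero, zero_sub] at this
  have hne : gapAt α N 0 ≠ gapAt α N q := by
    rw [ha, hb]
    exact hα.fract_intCast_mul_injective.ne (by omega)
  have htwo : ∀ m < N, gapAt α N m = Int.fract (((p : ℤ) : ℝ) * α) ∨
      gapAt α N m = Int.fract (((-q : ℤ) : ℝ) * α) := fun m hm => ha ▸ hb ▸
    gapAt_eq_or_eq_of_card_gapSet_eq_two hrel (by omega) (hbij.mapsTo (by omega : N - 1 < N)) hne hm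
  have hpq : p + q = N := le_antisymm
    (add_le_of_gapAt_eq_or_eq hα hN hp (hbij.mapsTo (by omega : 1 < N)).le htwo)
    (le_add_of_gapAt hα hp hq ha hb)
  intro j
  obtain ⟨r, hr, hj, hj1⟩ := exists_uc_eq_and_uc_add_one_eq (show 0 < N by omega) u j
  rw [hj, hj1]
  rcases htwo (u r) (hbij.mapsTo hr) with h | h <;>
    have := hα.fract_intCast_mul_injective ((hgap hr).symm.trans h) <;> omega
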